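/- Under the binary Dawid–Skene model with the general hyperplane rule: if t̄ ≥ 0, then the mean error rate satisfies E[E_N] ≤ min{ exp(−t̄²/2), exp(−t̄²/(2·(σ² + c·t̄/3))) }; furthermore, for every ε ∈ (0,1), if t̄ ≥ sqrt(2·ln(1/ε)), then E_N ≤ ε with probability at least 1 − exp(−N·D(ε ‖ φ(t̄))). -/

import Mathlib

open MeasureTheory ProbabilityTheory Real

noncomputable section

namespace CrowdBin

/-- Conditional law of `Z i j ∈ {0,−1,+1}` given the true label `y j = k ∈ {−1,+1}` in the
binary Dawid–Skene model: `q i` is the assignment probability, `pp i` (resp. `pn i`) is the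
accuracy on positive (resp. negative) items. -/
def condLaw {M : ℕ} (q pp pn : Fin M → ℝ) (i : Fin M) (k h : ℤ) : ℝ :=
  if h = 0 then 1 - q i
  else q i * (if h = k then (if k = 1 then pp i else pn i)
              else 1 - (if k = 1 then pp i else pn i))

/-- `t̄` for the general hyperplane rule with weights `v` and shift `a`. -/
def tbar {M : ℕ} (q pp pn v : Fin M → ℝ) (a : ℝ) : ℝ :=
  (Real.sqrt (∑ i, v i ^ 2))⁻¹ *
    min ((∑ i, q i * v i * (2 * pp i - 1)) + a) ((∑ i, q i * v i * (2 * pn i - 1)) - a)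

/-- `c = ‖v‖_∞ / ‖v‖₂`. -/
def cConst {M : ℕ} (v : Fin M → ℝ) : ℝ :=
  (sSup {x : ℝ | ∃ i : Fin M, x = |v i|}) / Real.sqrt (∑ i, v i ^ 2)

/-- `σ² = (1/‖v‖₂²)·Σ_i q_i v_i²`. -/
def sigmaSq {M : ℕ} (q v : Fin M → ℝ) : ℝ :=
  (∑ i, v i ^ 2)⁻¹ * ∑ i, q i * v i ^ 2

/-- The error rate `E_N`. -/
def errRate {Ω : Type*} {N : ℕ} (y yhat : Fin N → Ω → ℤ) (ω : Ω) : ℝ :=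
  (N : ℝ)⁻¹ * ∑ j, if yhat j ω ≠ y j ω then (1 : ℝ) else 0

/-- `φ(x) = exp(−x²/2)`. -/
def phi (x : ℝ) : ℝ := Real.exp (-x ^ 2 / 2)

/-- Kullback–Leibler divergence between Bernoulli distributions. -/
def klBer (x y : ℝ) : ℝ := x * Real.log (x / y) + (1 - x) * Real.log ((1 - x) / (1 - y))

end CrowdBin

/-! Given the true label `y_j = k`, the signed score `k (Σ_i v_i Z_ij + a)` is a sum of
independent three-point variables with mean `margin k ≥ t̄ ‖v‖₂`, and item `j` can only be
misclassified when this signed score is `≤ 0`. A Chernoff bound, each factor being controlled by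
Hoeffding's lemma (the variables lie in `[-1, 1]`) or by `e^x - 1 - x ≤ x² / (2 (1 - x/3))`
(Bernstein), gives the two per-item bounds, and averaging gives the bound on `E[E_N]`. The events
"the signed score of item `j` is `≤ 0`" are independent across items, each of probability at most
`φ(t̄) ≤ ε`, so the Chernoff bound for a sum of Bernoulli variables gives the Kullback–Leibler tail
bound on the error rate. -/

open Finset

namespace CrowdBin

lemma exp_sub_one_sub_le_exp_abs (x : ℝ) : exp x - 1 - x ≤ exp |x| - 1 - |x| := by
  rcases le_total 0 x with hx | hx
  · rw [abs_of_nonneg hx]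
  · have h := Real.self_le_sinh_iff.2 (neg_nonneg.2 hx)
    rw [Real.sinh_eq, neg_neg] at h
    rw [abs_of_nonpos hx]
    linarith

/-- Compare the exponential series termwise with `(x²/2) Σ (z/3)^n`, using `(n + 2)! ≥ 2 · 3^n`. -/
lemma exp_sub_one_sub_le_of_le {x z : ℝ} (hx : 0 ≤ x) (hxz : x ≤ z) (hz : z < 3) :
    exp x - 1 - x ≤ x ^ 2 / (2 * (1 - z / 3)) := by
  have hr0 : 0 ≤ z / 3 := by linarith
  have hr1 : z / 3 < 1 := by linarith
  have hsum : Summable fun n : ℕ => x ^ n / n.factorial := NormedSpace.expSeries_div_summable x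
  have htail : exp x - 1 - x = ∑' n : ℕ, x ^ (n + 2) / (n + 2).factorial := by
    have hexp : exp x = ∑' n : ℕ, x ^ n / n.factorial := by
      rw [Real.exp_eq_exp_ℝ, NormedSpace.exp_eq_tsum_div]
    rw [hexp, ← hsum.sum_add_tsum_nat_add 2]
    simp only [sum_range_succ, range_one, sum_singleton, pow_zero, pow_one, Nat.factorial_zero,
      Nat.factorial_one, Nat.cast_one, div_one]
    ring
  have hterm (n : ℕ) : x ^ (n + 2) / (n + 2).factorial ≤ x ^ 2 / 2 * (z / 3) ^ n := by
    have hfac : (2 * 3 ^ n : ℝ) ≤ (n + 2).factorial := by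
      have := Nat.factorial_mul_pow_le_factorial (m := 2) (n := n)
      rw [add_comm 2 n] at this
      exact_mod_cast this
    rw [div_le_iff₀ (by positivity)]
    calc x ^ (n + 2) = x ^ 2 * x ^ n := by ring
      _ ≤ x ^ 2 * z ^ n := by gcongr
      _ = x ^ 2 / 2 * (z / 3) ^ n * (2 * 3 ^ n) := by rw [div_pow]; field_simp
      _ ≤ x ^ 2 / 2 * (z / 3) ^ n * (n + 2).factorial := by gcongr
  calc exp x - 1 - x = ∑' n : ℕ, x ^ (n + 2) / (n + 2).factorial := htail
    _ ≤ ∑' n : ℕ, x ^ 2 / 2 * (z / 3) ^ n :=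
      ((summable_nat_add_iff 2).2 hsum).tsum_le_tsum hterm
        ((summable_geometric_of_lt_one hr0 hr1).mul_left _)
    _ = x ^ 2 / (2 * (1 - z / 3)) := by
      rw [tsum_mul_left, tsum_geometric_of_lt_one hr0 hr1]
      field_simp

lemma sum_sq_pos_of_ne_zero {ι : Type*} [Fintype ι] {v : ι → ℝ} (hv : v ≠ 0) :
    0 < ∑ i, v i ^ 2 := by
  obtain ⟨i, hi⟩ := Function.ne_iff.1 hv
  have hi : v i ≠ 0 := hi
  exact sum_pos' (fun i _ => sq_nonneg _) ⟨i, mem_univ i, by positivity⟩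

lemma abs_le_sSup_abs {ι : Type*} [Finite ι] (v : ι → ℝ) (i : ι) :
    |v i| ≤ sSup {x : ℝ | ∃ i, x = |v i|} := by
  have hrange : {x : ℝ | ∃ i, x = |v i|} = Set.range fun i => |v i| := by
    ext
    simp [eq_comm]
  rw [hrange]
  exact le_csSup (Set.finite_range _).bddAbove ⟨i, rfl⟩

lemma inv_natCast_mul_sum_le {N : ℕ} {x : Fin N → ℝ} {B : ℝ} (hx : ∀ j, x j ≤ B) (hB : 0 ≤ B) :
    (N : ℝ)⁻¹ * ∑ j, x j ≤ B := by
  rcases N.eq_zero_or_pos with rfl | hN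
  · simpa using hB
  calc (N : ℝ)⁻¹ * ∑ j, x j ≤ (N : ℝ)⁻¹ * ∑ _j : Fin N, B := by gcongr with j; exact hx j
    _ = B := by field_simp; simp

/-- The moment generating function at `s` of the law `threePoint r α` below. -/
def threePointMgf (r α s : ℝ) : ℝ := 1 - r + r * α * exp s + r * (1 - α) * exp (-s)

/-- The law of a vote counted `+1` if correct, `-1` if wrong and `0` if absent, for a worker
who labels the item with probability `r` and with accuracy `α`. -/
def threePoint (r α : ℝ) : Measure ℝ :=
  ENNReal.ofReal (1 - r) • Measure.dirac 0 + ENNReal.ofReal (r * α) • Measure.dirac 1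
    + ENNReal.ofReal (r * (1 - α)) • Measure.dirac (-1)

section threePoint

variable {r α : ℝ}

lemma integral_threePoint (hr : r ∈ Set.Icc 0 1) (hα : α ∈ Set.Icc 0 1) (f : ℝ → ℝ) :
    ∫ x, f x ∂threePoint r α = (1 - r) * f 0 + r * α * f 1 + r * (1 - α) * f (-1) := by
  obtain ⟨hr0, hr1⟩ := hr
  obtain ⟨hα0, hα1⟩ := hα
  have hint (c x : ℝ) : Integrable f (ENNReal.ofReal c • Measure.dirac x) :=
    (integrable_dirac enorm_lt_top).smul_measure ENNReal.ofReal_ne_top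
  rw [threePoint, integral_add_measure ((hint _ _).add_measure (hint _ _)) (hint _ _),
    integral_add_measure (hint _ _) (hint _ _)]
  simp [integral_smul_measure, ENNReal.toReal_ofReal (sub_nonneg.2 hr1),
    ENNReal.toReal_ofReal (mul_nonneg hr0 hα0),
    ENNReal.toReal_ofReal (mul_nonneg hr0 (sub_nonneg.2 hα1))]

lemma isProbabilityMeasure_threePoint (hr : r ∈ Set.Icc 0 1) (hα : α ∈ Set.Icc 0 1) :
    IsProbabilityMeasure (threePoint r α) := by
  obtain ⟨hr0, hr1⟩ := hr
  obtain ⟨hα0, hα1⟩ := hα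
  constructor
  simp only [threePoint, Measure.coe_add, Measure.coe_smul, Pi.add_apply, Pi.smul_apply,
    measure_univ, smul_eq_mul, mul_one]
  rw [← ENNReal.ofReal_add (sub_nonneg.2 hr1) (mul_nonneg hr0 hα0),
    ← ENNReal.ofReal_add (by nlinarith) (mul_nonneg hr0 (sub_nonneg.2 hα1))]
  ring_nf
  exact ENNReal.ofReal_one

lemma threePointMgf_nonneg (hr : r ∈ Set.Icc 0 1) (hα : α ∈ Set.Icc 0 1) (s : ℝ) :
    0 ≤ threePointMgf r α s := by
  obtain ⟨hr0, hr1⟩ := hr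
  obtain ⟨hα0, hα1⟩ := hα
  have h1 := mul_nonneg (mul_nonneg hr0 hα0) (exp_pos s).le
  have h2 := mul_nonneg (mul_nonneg hr0 (sub_nonneg.2 hα1)) (exp_pos (-s)).le
  rw [threePointMgf]
  linarith

/-- Hoeffding's lemma: `threePoint r α` lives on `[-1, 1]` and has mean `r (2α - 1)`. -/
lemma threePointMgf_le_hoeffding (hr : r ∈ Set.Icc 0 1) (hα : α ∈ Set.Icc 0 1) (s : ℝ) :
    threePointMgf r α s ≤ exp (s * (r * (2 * α - 1)) + s ^ 2 / 2) := by
  have := isProbabilityMeasure_threePoint hr hα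
  have hsupp : ∀ᵐ x ∂threePoint r α, id x ∈ Set.Icc (-1 : ℝ) 1 := by
    simp only [threePoint, ae_add_measure_iff]
    refine ⟨⟨Measure.ae_smul_measure ?_ _, Measure.ae_smul_measure ?_ _⟩,
      Measure.ae_smul_measure ?_ _⟩ <;> simp
  have hmgf := (hasSubgaussianMGF_of_mem_Icc aemeasurable_id hsupp).mgf_le s
  have hmean : (threePoint r α)[id] = r * (2 * α - 1) := by
    rw [integral_threePoint hr hα]
    simp only [id_eq, mul_zero, mul_one, zero_add, mul_neg]
    ring
  have hexp (x : ℝ) :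
      exp (s * (x - r * (2 * α - 1))) = exp (s * x) * exp (-(s * (r * (2 * α - 1)))) := by
    rw [← exp_add]; ring_nf
  have hc : (((‖(1 : ℝ) - -1‖₊ / 2) ^ 2 : NNReal) : ℝ) = 1 := by
    norm_num [← NNReal.coe_inj]
  rw [hmean, mgf, integral_threePoint hr hα] at hmgf
  simp only [id, hexp, hc, mul_zero, mul_one, mul_neg, exp_zero, one_mul] at hmgf
  rw [threePointMgf, exp_add, ← div_le_iff₀' (exp_pos _), div_eq_mul_inv, ← exp_neg]
  linarith

lemma threePointMgf_le_bernstein (hr : r ∈ Set.Icc 0 1) (hα : α ∈ Set.Icc 0 1) {s z : ℝ}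
    (hs : |s| ≤ z) (hz : z < 3) :
    threePointMgf r α s ≤ exp (s * (r * (2 * α - 1)) + r * (s ^ 2 / (2 * (1 - z / 3)))) := by
  obtain ⟨hr0, hr1⟩ := hr
  obtain ⟨hα0, hα1⟩ := hα
  set C := s ^ 2 / (2 * (1 - z / 3))
  have hC : exp |s| - 1 - |s| ≤ C := by
    simpa only [sq_abs] using exp_sub_one_sub_le_of_le (abs_nonneg s) hs hz
  have hpos : exp s - 1 - s ≤ C := (exp_sub_one_sub_le_exp_abs s).trans hC
  have hneg : exp (-s) - 1 - -s ≤ C := by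
    simpa only [abs_neg] using (exp_sub_one_sub_le_exp_abs (-s)).trans (abs_neg s ▸ hC)
  calc threePointMgf r α s
      = 1 + s * (r * (2 * α - 1))
          + (r * α * (exp s - 1 - s) + r * (1 - α) * (exp (-s) - 1 - -s)) := by
        rw [threePointMgf]; ring
    _ ≤ 1 + s * (r * (2 * α - 1)) + (r * α * C + r * (1 - α) * C) := by
        gcongr
    _ = s * (r * (2 * α - 1)) + r * C + 1 := by ring
    _ ≤ exp (s * (r * (2 * α - 1)) + r * C) := add_one_le_exp _

end threePoint

lemma sum_piFinset_ite_le_exp_mul_prod {ι κ : Type*} [Fintype ι] [DecidableEq ι] [DecidableEq κ]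
    (S : Finset κ) (w g : ι → κ → ℝ) (hw : ∀ i, ∀ x ∈ S, 0 ≤ w i x) (b : ℝ) {l : ℝ}
    (hl : 0 ≤ l) :
    ∑ h ∈ Fintype.piFinset (fun _ => S), (if ∑ i, g i (h i) + b ≤ 0 then ∏ i, w i (h i) else 0)
      ≤ exp (-(l * b)) * ∏ i, ∑ x ∈ S, w i x * exp (-(l * g i x)) := by
  rw [prod_univ_sum, mul_sum]
  refine sum_le_sum fun h hh => ?_
  have hW : 0 ≤ ∏ i, w i (h i) := prod_nonneg fun i _ => hw i _ (Fintype.mem_piFinset.1 hh i)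
  have hfactor : exp (-(l * b)) * ∏ i, (w i (h i) * exp (-(l * g i (h i))))
      = exp (-(l * (∑ i, g i (h i) + b))) * ∏ i, w i (h i) := by
    rw [prod_mul_distrib, ← exp_sum, mul_left_comm, ← exp_add, mul_comm]
    congr 2
    rw [mul_add, mul_sum, sum_neg_distrib]
    ring
  rw [hfactor]
  split_ifs with hneg
  · exact le_mul_of_one_le_left hW (one_le_exp (by nlinarith))
  · positivity

lemma le_exp_neg_sq_div_two_of_forall_le {P m n t : ℝ} (hn : 0 < n) (ht : 0 ≤ t)
    (hm : t * n ≤ m) (hP : ∀ l, 0 ≤ l → P ≤ exp (-(l * m) + l ^ 2 * n ^ 2 / 2)) :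
    P ≤ exp (-t ^ 2 / 2) := by
  refine (hP (t / n) (by positivity)).trans (exp_le_exp.2 ?_)
  have hlm : t / n * (t * n) ≤ t / n * m := mul_le_mul_of_nonneg_left hm (by positivity)
  have h1 : t / n * (t * n) = t ^ 2 := by field_simp
  have h2 : (t / n) ^ 2 * n ^ 2 = t ^ 2 := by field_simp
  linarith

lemma le_exp_bernstein_of_forall_le {P m n t V c : ℝ} (hn : 0 < n) (ht : 0 ≤ t)
    (hm : t * n ≤ m) (hV : 0 < V) (hc : 0 ≤ c)
    (hP : ∀ l, 0 ≤ l → l * (c * n) < 3 →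
      P ≤ exp (-(l * m) + l ^ 2 * (V * n ^ 2) / (2 * (1 - l * (c * n) / 3)))) :
    P ≤ exp (-t ^ 2 / (2 * (V + c * t / 3))) := by
  set D := V + c * t / 3 with hDdef
  have hD : 0 < D := by positivity
  have hlc : t / (n * D) * (c * n) = c * t / D := by field_simp
  have h3 : 1 - c * t / D / 3 = V / D := by field_simp; ring
  refine (hP (t / (n * D)) (by positivity) ?_).trans (exp_le_exp.2 ?_)
  · rw [hlc, div_lt_iff₀ hD, hDdef]
    linarith
  · rw [hlc, h3]
    have hlm : t / (n * D) * (t * n) ≤ t / (n * D) * m :=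
      mul_le_mul_of_nonneg_left hm (by positivity)
    have h1 : t / (n * D) * (t * n) = t ^ 2 / D := by field_simp
    have h2 : (t / (n * D)) ^ 2 * (V * n ^ 2) / (2 * (V / D)) = t ^ 2 / (2 * D) := by
      field_simp
    have h4 : -t ^ 2 / (2 * D) = -(t ^ 2 / D) + t ^ 2 / (2 * D) := by field_simp; ring
    linarith

lemma errRate_le_of_sum_indicator_le {Ω : Type*} {N : ℕ} {y yhat : Fin N → Ω → ℤ}
    {A : Fin N → Set Ω} (herr : ∀ j, {ω | yhat j ω ≠ y j ω} ⊆ A j) {ε : ℝ} (hε : 0 ≤ ε) {ω : Ω}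
    (hω : ∑ j, (A j).indicator 1 ω ≤ ε * N) : errRate y yhat ω ≤ ε := by
  have hcount : ∑ j, (if yhat j ω ≠ y j ω then (1 : ℝ) else 0) ≤ ∑ j, (A j).indicator 1 ω := by
    gcongr with j
    split_ifs with h
    · simp [Set.indicator_of_mem (herr j h)]
    · exact Set.indicator_nonneg (fun _ _ => zero_le_one) ω
  calc errRate y yhat ω ≤ (N : ℝ)⁻¹ * (ε * N) := by
        rw [errRate]; gcongr; exact hcount.trans hω
    _ ≤ ε := by
        rcases N.eq_zero_or_pos with rfl | hN
        · simpa using hε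
        · field_simp; rfl

lemma phi_le_of_sqrt_two_log_le {ε t : ℝ} (hε : 0 < ε) (ht : √(2 * log (1 / ε)) ≤ t) :
    phi t ≤ ε := by
  obtain ⟨-, hsq⟩ := sqrt_le_iff.1 ht
  calc phi t = exp (-t ^ 2 / 2) := rfl
    _ ≤ exp (log ε) := exp_le_exp.2 (by rw [one_div, log_inv] at hsq; linarith)
    _ = ε := exp_log hε

section indicator

variable {Ω : Type*} [MeasurableSpace Ω] {μ : Measure Ω} [IsProbabilityMeasure μ]

lemma mgf_indicator_one {A : Set Ω} (hA : MeasurableSet A) (t : ℝ) :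
    mgf (A.indicator 1) μ t = 1 - μ.real A + μ.real A * exp t := by
  have hfun : (fun ω => exp (t * A.indicator 1 ω))
      = fun ω => A.indicator (fun _ => exp t - 1) ω + 1 := by
    ext ω
    by_cases h : ω ∈ A <;> simp [h]
  rw [mgf, hfun, integral_add ((integrable_const _).indicator hA) (integrable_const _),
    integral_indicator_const _ hA]
  simp only [smul_eq_mul, integral_const, probReal_univ, mul_one]
  ring

/-- The optimal Chernoff parameter `l = log (ε (1 - p) / (p (1 - ε)))` for a Bernoulli(`p`)
variable turns its exponential moment bound into the Kullback–Leibler divergence. -/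
lemma exp_neg_mul_mul_one_sub_add_mul_exp_eq {ε p : ℝ} (hp0 : 0 < p) (hpε : p ≤ ε) (hε1 : ε < 1) :
    exp (-(log (ε * (1 - p) / (p * (1 - ε))) * ε))
        * (1 - p + p * exp (log (ε * (1 - p) / (p * (1 - ε)))))
      = exp (-klBer ε p) := by
  have hε0 : 0 < ε := hp0.trans_le hpε
  have h1p : 0 < 1 - p := by linarith
  have h1ε : 0 < 1 - ε := by linarith
  have hsplit : log (ε * (1 - p) / (p * (1 - ε))) = log (ε / p) - log ((1 - ε) / (1 - p)) := by
    rw [← log_div (by positivity) (by positivity)]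
    congr 1
    field_simp
  have hbase : 1 - p + p * exp (log (ε * (1 - p) / (p * (1 - ε)))) = (1 - p) / (1 - ε) := by
    rw [exp_log (by positivity)]
    field_simp
    ring
  have hinv : log ((1 - p) / (1 - ε)) = -log ((1 - ε) / (1 - p)) := by
    rw [← log_inv, inv_div]
  rw [hbase, ← exp_log (div_pos h1p h1ε), ← exp_add, klBer, hsplit, hinv]
  ring_nf

lemma measureReal_mul_card_lt_sum_indicator_le {ι : Type*} [Fintype ι] {A : ι → Set Ω}
    (hA : ∀ j, MeasurableSet (A j)) (hind : iIndepFun (fun j => (A j).indicator (1 : Ω → ℝ)) μ)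
    {p ε : ℝ} (hAp : ∀ j, μ.real (A j) ≤ p) (hp0 : 0 < p) (hpε : p ≤ ε) (hε1 : ε < 1) :
    μ.real {ω | ε * Fintype.card ι < ∑ j, (A j).indicator 1 ω}
      ≤ exp (-(Fintype.card ι) * klBer ε p) := by
  set l := log (ε * (1 - p) / (p * (1 - ε)))
  have hε0 : 0 < ε := hp0.trans_le hpε
  have hl : 0 ≤ l := log_nonneg <| by
    rw [one_le_div (by nlinarith)]
    nlinarith
  have hmeas (j : ι) : Measurable ((A j).indicator (1 : Ω → ℝ)) :=
    measurable_const.indicator (hA j)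
  have hint : Integrable (fun ω => exp (l * (∑ j, (A j).indicator 1) ω)) μ :=
    hind.integrable_exp_mul_sum hmeas fun j _ => integrable_exp_mul_of_mem_Icc (a := 0) (b := 1)
      (hmeas j).aemeasurable (ae_of_all _ fun ω => by
        by_cases h : ω ∈ A j <;> simp [h])
  have hfactor (j : ι) : 1 - μ.real (A j) + μ.real (A j) * exp l ≤ 1 - p + p * exp l := by
    nlinarith [mul_le_mul_of_nonneg_left (hAp j) (sub_nonneg.2 (one_le_exp hl))]
  calc μ.real {ω | ε * Fintype.card ι < ∑ j, (A j).indicator 1 ω}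
      ≤ μ.real {ω | ε * Fintype.card ι ≤ (∑ j, (A j).indicator 1) ω} :=
        measureReal_mono fun ω hω => by simpa [Finset.sum_apply] using hω.le
    _ ≤ exp (-l * (ε * Fintype.card ι)) * mgf (∑ j, (A j).indicator 1) μ l :=
        measure_ge_le_exp_mul_mgf _ hl hint
    _ = exp (-l * (ε * Fintype.card ι)) * ∏ j, (1 - μ.real (A j) + μ.real (A j) * exp l) := by
        rw [hind.mgf_sum hmeas]
        simp only [mgf_indicator_one (hA _)]
    _ ≤ exp (-l * (ε * Fintype.card ι)) * ∏ _j : ι, (1 - p + p * exp l) := by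
        refine mul_le_mul_of_nonneg_left (prod_le_prod (fun j _ => ?_) fun j _ => hfactor j)
          (exp_pos _).le
        nlinarith [measureReal_nonneg (μ := μ) (s := A j), measureReal_le_one (μ := μ) (s := A j),
          exp_pos l]
    _ = (exp (-(l * ε)) * (1 - p + p * exp l)) ^ Fintype.card ι := by
        rw [prod_const, card_univ, mul_pow, ← exp_nat_mul]
        ring_nf
    _ = exp (-(Fintype.card ι) * klBer ε p) := by
        rw [exp_neg_mul_mul_one_sub_add_mul_exp_eq hp0 hpε hε1, ← exp_nat_mul]
        ring_nf

lemma one_sub_exp_neg_klBer_le_measureReal_errRate_le {N : ℕ} {y yhat : Fin N → Ω → ℤ}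
    {A : Fin N → Set Ω} (herr : ∀ j, {ω | yhat j ω ≠ y j ω} ⊆ A j)
    (hA : ∀ j, MeasurableSet (A j)) (hind : iIndepFun (fun j => (A j).indicator (1 : Ω → ℝ)) μ)
    {p ε : ℝ} (hAp : ∀ j, μ.real (A j) ≤ p) (hp0 : 0 < p) (hpε : p ≤ ε) (hε1 : ε < 1) :
    1 - exp (-(N : ℝ) * klBer ε p) ≤ μ.real {ω | errRate y yhat ω ≤ ε} := by
  have htail := measureReal_mul_card_lt_sum_indicator_le hA hind hAp hp0 hpε hε1
  rw [Fintype.card_fin] at htail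
  have hbad : MeasurableSet {ω | ε * N < ∑ j, (A j).indicator (1 : Ω → ℝ) ω} :=
    measurableSet_lt measurable_const
      (Finset.measurable_sum _ fun j _ => measurable_const.indicator (hA j))
  calc 1 - exp (-(N : ℝ) * klBer ε p)
      ≤ 1 - μ.real {ω | ε * N < ∑ j, (A j).indicator 1 ω} := by linarith
    _ = μ.real {ω | ∑ j, (A j).indicator 1 ω ≤ ε * N} := by
        rw [← probReal_compl_eq_one_sub hbad, Set.compl_ofPred]
        simp only [not_lt]
    _ ≤ μ.real {ω | errRate y yhat ω ≤ ε} :=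
        measureReal_mono fun ω hω => errRate_le_of_sum_indicator_le herr (hp0.trans_le hpε).le hω

end indicator

section DawidSkene

variable {M : ℕ}

def accuracy (pp pn : Fin M → ℝ) (k : ℤ) (i : Fin M) : ℝ := if k = 1 then pp i else pn i

def voteSet (M : ℕ) : Finset (Fin M → ℤ) := Fintype.piFinset fun _ => {0, 1, -1}

def score (v : Fin M → ℝ) (a : ℝ) (h : Fin M → ℤ) : ℝ := ∑ i, v i * (h i : ℝ) + a

/-- The conditional mean of `k * score v a (Z · j)` given `y j = k`. -/
def margin (q pp pn v : Fin M → ℝ) (a : ℝ) (k : ℤ) : ℝ :=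
  ∑ i, q i * v i * (2 * accuracy pp pn k i - 1) + k * a

/-- The conditional probability, given `y j = k`, that the score of item `j` fails to have the
sign of `k`. -/
def condErrProb (q pp pn v : Fin M → ℝ) (a : ℝ) (k : ℤ) : ℝ :=
  ∑ h ∈ voteSet M, if (k : ℝ) * score v a h ≤ 0 then ∏ i, condLaw q pp pn i k (h i) else 0

variable {q pp pn : Fin M → ℝ} {k : ℤ}

lemma mem_voteSet {h : Fin M → ℤ} :
    h ∈ voteSet M ↔ ∀ i, h i = 0 ∨ h i = 1 ∨ h i = -1 := by
  simp [voteSet]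

lemma accuracy_mem_Icc (hpp : ∀ i, pp i ∈ Set.Icc 0 1) (hpn : ∀ i, pn i ∈ Set.Icc 0 1)
    (k : ℤ) (i : Fin M) : accuracy pp pn k i ∈ Set.Icc 0 1 := by
  unfold accuracy
  split_ifs
  exacts [hpp i, hpn i]

lemma condLaw_nonneg {i : Fin M} (hq : q i ∈ Set.Icc 0 1)
    (hacc : accuracy pp pn k i ∈ Set.Icc 0 1) (x : ℤ) : 0 ≤ condLaw q pp pn i k x := by
  change 0 ≤ if x = 0 then 1 - q i
    else q i * (if x = k then accuracy pp pn k i else 1 - accuracy pp pn k i)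
  obtain ⟨hq0, hq1⟩ := hq
  obtain ⟨hacc0, hacc1⟩ := hacc
  split_ifs
  · linarith
  · exact mul_nonneg hq0 hacc0
  · exact mul_nonneg hq0 (by linarith)

lemma sum_condLaw_mul_exp (hk : k = 1 ∨ k = -1) (v : Fin M → ℝ) (i : Fin M) (l : ℝ) :
    ∑ x ∈ ({0, 1, -1} : Finset ℤ), condLaw q pp pn i k x * exp (-(l * (k * v i * x)))
      = threePointMgf (q i) (accuracy pp pn k i) (-(l * v i)) := by
  rcases hk with rfl | rfl <;>
    simp [condLaw, accuracy, threePointMgf] <;> ring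

lemma condErrProb_le_exp_mul_prod (hk : k = 1 ∨ k = -1) (hq : ∀ i, q i ∈ Set.Icc 0 1)
    (hacc : ∀ i, accuracy pp pn k i ∈ Set.Icc 0 1) (v : Fin M → ℝ) (a : ℝ) {l : ℝ}
    (hl : 0 ≤ l) :
    condErrProb q pp pn v a k
      ≤ exp (-(l * (k * a))) * ∏ i, threePointMgf (q i) (accuracy pp pn k i) (-(l * v i)) := by
  have hscore (h : Fin M → ℤ) : (k : ℝ) * score v a h = ∑ i, k * v i * (h i : ℝ) + k * a := by
    simp only [score, mul_add, mul_sum, mul_assoc]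
  simp only [condErrProb, hscore, ← sum_condLaw_mul_exp hk v _ l]
  exact sum_piFinset_ite_le_exp_mul_prod {0, 1, -1} _ (fun i (x : ℤ) => (k : ℝ) * v i * x)
    (fun i x _ => condLaw_nonneg (hq i) (hacc i) x) _ hl

lemma condErrProb_le_hoeffding (hk : k = 1 ∨ k = -1) (hq : ∀ i, q i ∈ Set.Icc 0 1)
    (hacc : ∀ i, accuracy pp pn k i ∈ Set.Icc 0 1) (v : Fin M → ℝ) (a : ℝ) {l : ℝ}
    (hl : 0 ≤ l) :
    condErrProb q pp pn v a k
      ≤ exp (-(l * margin q pp pn v a k) + l ^ 2 * (∑ i, v i ^ 2) / 2) := by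
  refine (condErrProb_le_exp_mul_prod hk hq hacc v a hl).trans ?_
  have hterm (i : Fin M) : -(l * v i) * (q i * (2 * accuracy pp pn k i - 1)) + (-(l * v i)) ^ 2 / 2
      = -(l * (q i * v i * (2 * accuracy pp pn k i - 1))) + l ^ 2 / 2 * v i ^ 2 := by ring
  calc exp (-(l * (k * a))) * ∏ i, threePointMgf (q i) (accuracy pp pn k i) (-(l * v i))
      ≤ exp (-(l * (k * a))) * ∏ i, exp (-(l * v i) * (q i * (2 * accuracy pp pn k i - 1))
          + (-(l * v i)) ^ 2 / 2) := by
        refine mul_le_mul_of_nonneg_left (prod_le_prod (fun i _ => ?_) fun i _ => ?_) (exp_pos _).le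
        exacts [threePointMgf_nonneg (hq i) (hacc i) _,
          threePointMgf_le_hoeffding (hq i) (hacc i) _]
    _ = exp (-(l * margin q pp pn v a k) + l ^ 2 * (∑ i, v i ^ 2) / 2) := by
        rw [← exp_sum, ← exp_add]
        simp only [hterm, sum_add_distrib, sum_neg_distrib, ← mul_sum, margin]
        congr 1
        ring

lemma condErrProb_le_bernstein (hk : k = 1 ∨ k = -1) (hq : ∀ i, q i ∈ Set.Icc 0 1)
    (hacc : ∀ i, accuracy pp pn k i ∈ Set.Icc 0 1) {v : Fin M → ℝ} {B : ℝ}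
    (hB : ∀ i, |v i| ≤ B) (a : ℝ) {l : ℝ} (hl : 0 ≤ l) (hlB : l * B < 3) :
    condErrProb q pp pn v a k
      ≤ exp (-(l * margin q pp pn v a k)
          + l ^ 2 * (∑ i, q i * v i ^ 2) / (2 * (1 - l * B / 3))) := by
  refine (condErrProb_le_exp_mul_prod hk hq hacc v a hl).trans ?_
  have hs (i : Fin M) : |-(l * v i)| ≤ l * B := by
    rw [abs_neg, abs_mul, abs_of_nonneg hl]
    exact mul_le_mul_of_nonneg_left (hB i) hl
  have hterm (i : Fin M) : -(l * v i) * (q i * (2 * accuracy pp pn k i - 1))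
        + q i * ((-(l * v i)) ^ 2 / (2 * (1 - l * B / 3)))
      = -(l * (q i * v i * (2 * accuracy pp pn k i - 1)))
        + l ^ 2 / (2 * (1 - l * B / 3)) * (q i * v i ^ 2) := by ring
  calc exp (-(l * (k * a))) * ∏ i, threePointMgf (q i) (accuracy pp pn k i) (-(l * v i))
      ≤ exp (-(l * (k * a))) * ∏ i, exp (-(l * v i) * (q i * (2 * accuracy pp pn k i - 1))
          + q i * ((-(l * v i)) ^ 2 / (2 * (1 - l * B / 3)))) := by
        refine mul_le_mul_of_nonneg_left (prod_le_prod (fun i _ => ?_) fun i _ => ?_) (exp_pos _).le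
        exacts [threePointMgf_nonneg (hq i) (hacc i) _,
          threePointMgf_le_bernstein (hq i) (hacc i) (hs i) hlB]
    _ = _ := by
        rw [← exp_sum, ← exp_add]
        simp only [hterm, sum_add_distrib, sum_neg_distrib, ← mul_sum, margin]
        congr 1
        ring

variable {v : Fin M → ℝ} {a : ℝ}

lemma tbar_mul_sqrt_eq_min (hv : v ≠ 0) :
    tbar q pp pn v a * √(∑ i, v i ^ 2) = min (margin q pp pn v a 1) (margin q pp pn v a (-1)) := by
  have hn : √(∑ i, v i ^ 2) ≠ 0 := (sqrt_pos.2 (sum_sq_pos_of_ne_zero hv)).ne'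
  simp only [tbar, margin, accuracy, if_true, show ((-1 : ℤ) = 1) ↔ False by decide, if_false]
  field_simp
  push_cast
  ring_nf

lemma tbar_mul_sqrt_le_margin (hv : v ≠ 0) (hk : k = 1 ∨ k = -1) :
    tbar q pp pn v a * √(∑ i, v i ^ 2) ≤ margin q pp pn v a k := by
  rw [tbar_mul_sqrt_eq_min hv]
  rcases hk with rfl | rfl
  exacts [min_le_left _ _, min_le_right _ _]

lemma condErrProb_le_exp_neg_tbar_sq (hv : v ≠ 0) (hk : k = 1 ∨ k = -1)
    (hq : ∀ i, q i ∈ Set.Icc 0 1) (hacc : ∀ i, accuracy pp pn k i ∈ Set.Icc 0 1)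
    (ht : 0 ≤ tbar q pp pn v a) :
    condErrProb q pp pn v a k ≤ exp (-tbar q pp pn v a ^ 2 / 2) := by
  have hn := sum_sq_pos_of_ne_zero hv
  refine le_exp_neg_sq_div_two_of_forall_le (sqrt_pos.2 hn) ht (tbar_mul_sqrt_le_margin hv hk)
    fun l hl => ?_
  rw [sq_sqrt hn.le]
  exact condErrProb_le_hoeffding hk hq hacc v a hl

/-- If all `q i v i` vanished, the two margins would be `a` and `-a`, forcing `t̄ ≤ 0`. -/
lemma sigmaSq_pos_of_tbar_pos (hq : ∀ i, 0 ≤ q i) (ht : 0 < tbar q pp pn v a) :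
    0 < sigmaSq q v := by
  have hv : v ≠ 0 := by
    rintro rfl
    simp [tbar] at ht
  refine mul_pos (inv_pos.2 (sum_sq_pos_of_ne_zero hv)) ?_
  refine (sum_nonneg fun i _ => mul_nonneg (hq i) (sq_nonneg _)).lt_of_ne fun hzero => ?_
  have hqv (i : Fin M) : q i * v i = 0 := by
    have := (sum_eq_zero_iff_of_nonneg fun i _ => mul_nonneg (hq i) (sq_nonneg (v i))).1
      hzero.symm i (mem_univ i)
    simpa [sq, ← mul_assoc] using this
  have hmin : 0 < min (margin q pp pn v a 1) (margin q pp pn v a (-1)) :=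
    tbar_mul_sqrt_eq_min hv ▸ mul_pos ht (sqrt_pos.2 (sum_sq_pos_of_ne_zero hv))
  have hsum : margin q pp pn v a 1 + margin q pp pn v a (-1) = 0 := by
    simp [margin, hqv]
  linarith [min_le_left (margin q pp pn v a 1) (margin q pp pn v a (-1)),
    min_le_right (margin q pp pn v a 1) (margin q pp pn v a (-1))]

lemma condErrProb_le_exp_bernstein (hv : v ≠ 0) (hk : k = 1 ∨ k = -1)
    (hq : ∀ i, q i ∈ Set.Icc 0 1) (hacc : ∀ i, accuracy pp pn k i ∈ Set.Icc 0 1)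
    (ht : 0 ≤ tbar q pp pn v a) :
    condErrProb q pp pn v a k ≤ exp (-tbar q pp pn v a ^ 2
      / (2 * (sigmaSq q v + cConst v * tbar q pp pn v a / 3))) := by
  rcases ht.eq_or_lt with ht0 | htpos
  · simpa [← ht0] using condErrProb_le_exp_neg_tbar_sq hv hk hq hacc ht
  have hn := sum_sq_pos_of_ne_zero hv
  have hn' : 0 < √(∑ i, v i ^ 2) := sqrt_pos.2 hn
  obtain ⟨i₀, -⟩ := Function.ne_iff.1 hv
  have hc : cConst v * √(∑ i, v i ^ 2) = sSup {x : ℝ | ∃ i, x = |v i|} := by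
    rw [cConst, div_mul_cancel₀ _ hn'.ne']
  have hV : sigmaSq q v * √(∑ i, v i ^ 2) ^ 2 = ∑ i, q i * v i ^ 2 := by
    rw [sigmaSq, sq_sqrt hn.le]
    field_simp
  refine le_exp_bernstein_of_forall_le hn' ht (tbar_mul_sqrt_le_margin hv hk)
    (sigmaSq_pos_of_tbar_pos (fun i => (hq i).1) htpos)
    (div_nonneg ((abs_nonneg _).trans (abs_le_sSup_abs v i₀)) hn'.le) fun l hl hlB => ?_
  rw [hc, hV]
  rw [hc] at hlB
  exact condErrProb_le_bernstein hk hq hacc (abs_le_sSup_abs v) a hl hlB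

end DawidSkene

lemma measureReal_mul_score_nonpos_eq {Ω : Type*} [MeasurableSpace Ω] {μ : Measure Ω}
    [IsFiniteMeasure μ] {M : ℕ} {Y : Ω → ℤ} {X : Fin M → Ω → ℤ}
    (hY : Measurable Y) (hX : ∀ i, Measurable (X i)) (hYval : ∀ ω, Y ω = 1 ∨ Y ω = -1)
    (hXval : ∀ i ω, X i ω = 0 ∨ X i ω = 1 ∨ X i ω = -1) {pri : ℝ} {q pp pn : Fin M → ℝ}
    (hlaw : ∀ k : ℤ, (k = 1 ∨ k = -1) → ∀ h : Fin M → ℤ, (∀ i, h i = 0 ∨ h i = 1 ∨ h i = -1) →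
      μ.real {ω | Y ω = k ∧ ∀ i, X i ω = h i}
        = (if k = 1 then pri else 1 - pri) * ∏ i, condLaw q pp pn i k (h i))
    (v : Fin M → ℝ) (a : ℝ) :
    μ.real {ω | (Y ω : ℝ) * score v a (fun i => X i ω) ≤ 0}
      = pri * condErrProb q pp pn v a 1 + (1 - pri) * condErrProb q pp pn v a (-1) := by
  set ξ : Ω → ℤ × (Fin M → ℤ) := fun ω => (Y ω, fun i => X i ω)
  have hξ : Measurable ξ := hY.prodMk (measurable_pi_lambda _ hX)
  have hfiber (k : ℤ) (h : Fin M → ℤ) :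
      ξ ⁻¹' {(k, h)} = {ω | Y ω = k ∧ ∀ i, X i ω = h i} := by
    ext ω
    simp [ξ, funext_iff]
  have hset : {ω | (Y ω : ℝ) * score v a (fun i => X i ω) ≤ 0}
      = ξ ⁻¹' ↑((({1, -1} : Finset ℤ) ×ˢ voteSet M).filter
          fun p => (p.1 : ℝ) * score v a p.2 ≤ 0) := by
    ext ω
    simp [ξ, mem_voteSet, hYval ω, hXval _ ω]
  rw [hset, ← sum_measureReal_preimage_singleton _ fun p _ => hξ (measurableSet_singleton p),
    sum_filter, sum_product, sum_pair (by decide), condErrProb, condErrProb, mul_sum, mul_sum]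
  congr 1
  · refine sum_congr rfl fun h hh => ?_
    split_ifs <;> simp [hfiber, hlaw 1 (by norm_num) h (mem_voteSet.1 hh)]
  · refine sum_congr rfl fun h hh => ?_
    split_ifs <;> simp [hfiber, hlaw (-1) (by norm_num) h (mem_voteSet.1 hh)]

lemma setOf_ne_subset_mul_nonpos {Ω : Type*} {Y Yhat : Ω → ℤ} {s : Ω → ℝ}
    (hY : ∀ ω, Y ω = 1 ∨ Y ω = -1) (hpos : ∀ ω, 0 < s ω → Yhat ω = 1)
    (hneg : ∀ ω, s ω < 0 → Yhat ω = -1) : {ω | Yhat ω ≠ Y ω} ⊆ {ω | (Y ω : ℝ) * s ω ≤ 0} := by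
  intro ω (hne : Yhat ω ≠ Y ω)
  by_contra! hmul
  simp only [Set.mem_ofPred_eq, not_le] at hmul
  rcases hY ω with hy | hy <;> rw [hy] at hne hmul <;> push_cast at hmul
  · exact hne (hpos ω (by linarith))
  · exact hne (hneg ω (by linarith))

end CrowdBin

open CrowdBin

theorem hyperplane_rule_error_bounds_general
    {Ω : Type*} [MeasurableSpace Ω] (μ : Measure Ω) [IsProbabilityMeasure μ]
    {M N : ℕ}
    (y : Fin N → Ω → ℤ) (Z : Fin M → Fin N → Ω → ℤ)
    (hym : ∀ j, Measurable (y j)) (hZm : ∀ i j, Measurable (Z i j))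
    (hyval : ∀ j ω, y j ω = 1 ∨ y j ω = -1)
    (hZval : ∀ i j ω, Z i j ω = 0 ∨ Z i j ω = 1 ∨ Z i j ω = -1)
    (pri : ℝ) (q pp pn : Fin M → ℝ)
    (hpri0 : 0 ≤ pri) (hpri1 : pri ≤ 1)
    (hq0 : ∀ i, 0 ≤ q i) (hq1 : ∀ i, q i ≤ 1)
    (hpp0 : ∀ i, 0 ≤ pp i) (hpp1 : ∀ i, pp i ≤ 1)
    (hpn0 : ∀ i, 0 ≤ pn i) (hpn1 : ∀ i, pn i ≤ 1)
    (hlaw : ∀ (j : Fin N) (k : ℤ), (k = 1 ∨ k = -1) →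
      ∀ h : Fin M → ℤ, (∀ i, h i = 0 ∨ h i = 1 ∨ h i = -1) →
      (μ {ω | y j ω = k ∧ ∀ i, Z i j ω = h i}).toReal
        = (if k = 1 then pri else 1 - pri) * ∏ i, CrowdBin.condLaw q pp pn i k (h i))
    (hindep : iIndepFun (fun j ω => (y j ω, fun i => Z i j ω)) μ)
    (v : Fin M → ℝ) (hv : v ≠ 0) (a : ℝ)
    (yhat : Fin N → Ω → ℤ)
    (hyhatpos : ∀ j ω, 0 < (∑ i, v i * (Z i j ω : ℝ)) + a → yhat j ω = 1)
    (hyhatneg : ∀ j ω, (∑ i, v i * (Z i j ω : ℝ)) + a < 0 → yhat j ω = -1) :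
    (0 ≤ CrowdBin.tbar q pp pn v a →
      (N : ℝ)⁻¹ * ∑ j, (μ {ω | yhat j ω ≠ y j ω}).toReal
        ≤ min (Real.exp (-(CrowdBin.tbar q pp pn v a) ^ 2 / 2))
            (Real.exp (-(CrowdBin.tbar q pp pn v a) ^ 2 /
              (2 * (CrowdBin.sigmaSq q v
                + CrowdBin.cConst v * CrowdBin.tbar q pp pn v a / 3)))))
    ∧ (∀ ε : ℝ, 0 < ε → ε < 1 →
        Real.sqrt (2 * Real.log (1 / ε)) ≤ CrowdBin.tbar q pp pn v a →
        1 - Real.exp (-(N : ℝ) *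
            CrowdBin.klBer ε (CrowdBin.phi (CrowdBin.tbar q pp pn v a)))
          ≤ (μ {ω | CrowdBin.errRate y yhat ω ≤ ε}).toReal) := by
  set t := tbar q pp pn v a
  have hq i : q i ∈ Set.Icc 0 1 := ⟨hq0 i, hq1 i⟩
  have hacc := accuracy_mem_Icc (fun i => ⟨hpp0 i, hpp1 i⟩) fun i => ⟨hpn0 i, hpn1 i⟩
  set bad : Set (ℤ × (Fin M → ℤ)) := {p | (p.1 : ℝ) * score v a p.2 ≤ 0}
  set A : Fin N → Set Ω := fun j => (fun ω => (y j ω, fun i => Z i j ω)) ⁻¹' bad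
  have herr j : {ω | yhat j ω ≠ y j ω} ⊆ A j :=
    setOf_ne_subset_mul_nonpos (hyval j) (hyhatpos j) (hyhatneg j)
  have hA j B (hB : ∀ k : ℤ, k = 1 ∨ k = -1 → condErrProb q pp pn v a k ≤ B) :
      μ.real (A j) ≤ B :=
    calc μ.real (A j)
        = pri * condErrProb q pp pn v a 1 + (1 - pri) * condErrProb q pp pn v a (-1) :=
          measureReal_mul_score_nonpos_eq (hym j) (fun i => hZm i j) (hyval j)
            (fun i => hZval i j) (hlaw j) v a
      _ ≤ B := by nlinarith [hB 1 (by norm_num), hB (-1) (by norm_num)]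
  refine ⟨fun ht => ?_, fun ε hε0 hε1 hεt => ?_⟩
  · exact inv_natCast_mul_sum_le (fun j => (measureReal_mono (herr j)).trans <| hA j _ fun k hk =>
      le_min (condErrProb_le_exp_neg_tbar_sq hv hk hq (hacc k) ht)
        (condErrProb_le_exp_bernstein hv hk hq (hacc k) ht)) (le_min (exp_pos _).le (exp_pos _).le)
  have ht : 0 ≤ t := (sqrt_nonneg _).trans hεt
  exact one_sub_exp_neg_klBer_le_measureReal_errRate_le herr
    (fun j => ((hym j).prodMk (measurable_pi_lambda _ fun i => hZm i j)) .of_discrete)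
    (hindep.comp (fun _ => bad.indicator 1) fun _ => measurable_of_countable _)
    (fun j => hA j _ fun k hk => condErrProb_le_exp_neg_tbar_sq hv hk hq (hacc k) ht)
    (exp_pos _) (phi_le_of_sqrt_two_log_le hε0 hεt) hε1

/-- Under the binary Dawid–Skene model with the general hyperplane rule
`ŷ_j = sign(Σ_i v_i Z_ij + a)`: if `t̄ ≥ 0` then
`E[E_N] ≤ min{exp(−t̄²/2), exp(−t̄²/(2(σ² + c t̄/3)))}`; furthermore for every `ε ∈ (0,1)`,
if `t̄ ≥ sqrt(2 ln(1/ε))` then `E_N ≤ ε` with probability at least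
`1 − exp(−N·D(ε ‖ φ(t̄)))`. -/
theorem hyperplane_rule_error_bounds
    {Ω : Type*} [MeasurableSpace Ω] (μ : Measure Ω) [IsProbabilityMeasure μ]
    {M N : ℕ} (hM : 0 < M) (hN : 0 < N)
    (y : Fin N → Ω → ℤ) (Z : Fin M → Fin N → Ω → ℤ)
    (hym : ∀ j, Measurable (y j)) (hZm : ∀ i j, Measurable (Z i j))
    (hyval : ∀ j ω, y j ω = 1 ∨ y j ω = -1)
    (hZval : ∀ i j ω, Z i j ω = 0 ∨ Z i j ω = 1 ∨ Z i j ω = -1)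
    (pri : ℝ) (q pp pn : Fin M → ℝ)
    (hpri0 : 0 ≤ pri) (hpri1 : pri ≤ 1)
    (hq0 : ∀ i, 0 ≤ q i) (hq1 : ∀ i, q i ≤ 1)
    (hpp0 : ∀ i, 0 ≤ pp i) (hpp1 : ∀ i, pp i ≤ 1)
    (hpn0 : ∀ i, 0 ≤ pn i) (hpn1 : ∀ i, pn i ≤ 1)
    (hprior : ∀ j : Fin N, (μ {ω | y j ω = 1}).toReal = pri)
    (hlaw : ∀ (j : Fin N) (k : ℤ), (k = 1 ∨ k = -1) →
      ∀ h : Fin M → ℤ, (∀ i, h i = 0 ∨ h i = 1 ∨ h i = -1) →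
      (μ {ω | y j ω = k ∧ ∀ i, Z i j ω = h i}).toReal
        = (if k = 1 then pri else 1 - pri) * ∏ i, CrowdBin.condLaw q pp pn i k (h i))
    (hindep : iIndepFun (fun j ω => (y j ω, fun i => Z i j ω)) μ)
    (v : Fin M → ℝ) (hv : v ≠ 0) (a : ℝ)
    (yhat : Fin N → Ω → ℤ) (hyhatm : ∀ j, Measurable (yhat j))
    (hyhatval : ∀ j ω, yhat j ω = 1 ∨ yhat j ω = -1)
    (hyhatpos : ∀ j ω, 0 < (∑ i, v i * (Z i j ω : ℝ)) + a → yhat j ω = 1)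
    (hyhatneg : ∀ j ω, (∑ i, v i * (Z i j ω : ℝ)) + a < 0 → yhat j ω = -1) :
    (0 ≤ CrowdBin.tbar q pp pn v a →
      (N : ℝ)⁻¹ * ∑ j, (μ {ω | yhat j ω ≠ y j ω}).toReal
        ≤ min (Real.exp (-(CrowdBin.tbar q pp pn v a) ^ 2 / 2))
            (Real.exp (-(CrowdBin.tbar q pp pn v a) ^ 2 /
              (2 * (CrowdBin.sigmaSq q v
                + CrowdBin.cConst v * CrowdBin.tbar q pp pn v a / 3)))))
    ∧ (∀ ε : ℝ, 0 < ε → ε < 1 →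
        Real.sqrt (2 * Real.log (1 / ε)) ≤ CrowdBin.tbar q pp pn v a →
        1 - Real.exp (-(N : ℝ) *
            CrowdBin.klBer ε (CrowdBin.phi (CrowdBin.tbar q pp pn v a)))
          ≤ (μ {ω | CrowdBin.errRate y yhat ω ≤ ε}).toReal) :=
  hyperplane_rule_error_bounds_general μ y Z hym hZm hyval hZval pri q pp pn hpri0 hpri1 hq0 hq1
    hpp0 hpp1 hpn0 hpn1 hlaw hindep v hv a yhat hyhatpos hyhatneg
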